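/- Let D be a commutative domain and s a finite sequence over D. Let μ = (μ_1, μ_2) and μ' = (μ'_1, μ'_2) be the minimal solution for s and the auxiliary previous solution produced by the inductive Berlekamp–Massey-type construction (Algorithm 4.1 of the paper), with initializations μ = (1,0), μ' = (0,−1), and let ∇_s ∈ D \ {0} be the product of discrepancies defined recursively alongside the algorithm (∇ = 1 initially; ∇ is multiplied by Δ'_1 when e ≤ 0 and by Δ_1 when e ≥ 1 at each update with nonzero discrepancy). Then μ_2 μ'_1 − μ_1 μ'_2 = ∇_s. -/
import Mathlib

/-- Discrepancy `Δ(φ; s₀,…,s₋ₖ)` of `φ` with respect to the length-`(k+1)` prefix: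
the coefficient `(φ·t̄)_{deg φ − k}`. -/
noncomputable def disc {D : Type*} [CommRing D] (s : ℕ → D) (k : ℕ) (φ : Polynomial D) : D :=
  ∑ j ∈ Finset.range (φ.natDegree + 1),
    if φ.natDegree ≤ j + k then φ.coeff j * s (j + k - φ.natDegree) else 0
/-- State of the Berlekamp–Massey-type algorithm (Algorithm 4.1):
current minimal solution `μ`, auxiliary previous solution `μ'`,
previous nonzero discrepancy `Δ'₁`, the integer `e`, and the product `∇` of discrepancies. -/
structure BMState (D : Type*) [CommRing D] where
  mu : Polynomial D × Polynomial D
  mu' : Polynomial D × Polynomial D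
  dp : D
  e : ℤ
  nabla : D

open Polynomial in
/-- One iteration of the algorithm, processing the term `s₋ₖ`. -/
noncomputable def bmStep {D : Type*} [CommRing D] [DecidableEq D]
    (s : ℕ → D) (k : ℕ) (st : BMState D) : BMState D :=
  let Δ := disc s k st.mu.1
  if Δ = 0 then { st with e := st.e + 1 }
  else if st.e ≤ 0 then
    { st with
      mu := (C st.dp * st.mu.1 - C Δ * X ^ (-st.e).toNat * st.mu'.1,
             C st.dp * st.mu.2 - C Δ * X ^ (-st.e).toNat * st.mu'.2),
      nabla := st.dp * st.nabla,
      e := st.e + 1 }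
  else
    { mu := (C st.dp * X ^ st.e.toNat * st.mu.1 - C Δ * st.mu'.1,
             C st.dp * X ^ st.e.toNat * st.mu.2 - C Δ * st.mu'.2),
      mu' := st.mu,
      dp := Δ,
      nabla := Δ * st.nabla,
      e := -st.e + 1 }

/-- Running the algorithm on the first `n` terms `s₀, …, s₁₋ₙ`
starting from `μ = (1,0)`, `μ' = (0,−1)`, `Δ'₁ = 1`, `e = 1`, `∇ = 1`. -/
noncomputable def bmRun {D : Type*} [CommRing D] [DecidableEq D] (s : ℕ → D) : ℕ → BMState D
  | 0 => ⟨(1, 0), (0, -1), 1, 1, 1⟩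
  | (k + 1) => bmStep s k (bmRun s k)

open Polynomial in
/-- The algorithm's pair `(μ, μ')` satisfies `μ₂ μ'₁ − μ₁ μ'₂ = ∇ₛ` at every stage. -/
theorem bm_bezout_identity {D : Type*} [CommRing D] [IsDomain D] [DecidableEq D]
    (s : ℕ → D) (n : ℕ) :
    (bmRun s n).mu.2 * (bmRun s n).mu'.1 - (bmRun s n).mu.1 * (bmRun s n).mu'.2 =
      C (bmRun s n).nabla := by
  induction n with
  | zero => simp [bmRun]
  | succ k ih =>
    simp only [bmRun]
    set st := bmRun s k
    unfold bmStep
    by_cases h : disc s k st.mu.1 = 0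
    · simpa [h] using ih
    · by_cases he : st.e ≤ 0 <;>
        simp only [h, he, if_true, if_false, if_neg h, map_mul]
      · linear_combination (norm := ring) C st.dp * ih
      · linear_combination (norm := ring) C (disc s k st.mu.1) * ih
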